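/- arXiv:1603.06157 — 6 statements merged into one kernel-verified Lean document; each statement's English description precedes it below -/
import Mathlib

section
/- Let N, M ≥ 0 be integers and g > 0 a real number. On the region U, the dCS ground state Ψ₀ is a pointwise eigenfunction of the deformed Calogero–Sutherland operator: H_{N,M}(x,y;g) Ψ₀ = E₀ · Ψ₀ on U, where E₀ = (g²/12)·[(N − M/g)³ − (N − M/g³)]. -/
open Finset

/-- Partial derivative in the `j`-th coordinate of a function `(Fin n → ℝ) → ℂ`. -/
noncomputable def pd {n : ℕ} (j : Fin n) (f : (Fin n → ℝ) → ℂ) : (Fin n → ℝ) → ℂ :=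
  fun x => deriv (fun t : ℝ => f (Function.update x j t)) (x j)

/-- The deformed Calogero–Sutherland operator `H_{N,M}(x,y;g)`, acting on functions of
`(x_1,…,x_N,y_1,…,y_M)` encoded as `u : Fin (N+M) → ℝ` with `x_j = u (Fin.castAdd M j)`
and `y_k = u (Fin.natAdd N k)`. -/
noncomputable def HNM (N M : ℕ) (g : ℝ) (f : (Fin (N + M) → ℝ) → ℂ) :
    (Fin (N + M) → ℝ) → ℂ := fun u =>
  -(∑ j : Fin N, pd (Fin.castAdd M j) (pd (Fin.castAdd M j) f) u)
    + (g : ℂ) * ∑ k : Fin M, pd (Fin.natAdd N k) (pd (Fin.natAdd N k) f) u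
    + (((∑ j : Fin N, ∑ j' : Fin N, if j < j' then
            g * (g - 1) / (2 * Real.sin ((u (Fin.castAdd M j) - u (Fin.castAdd M j')) / 2) ^ 2)
          else 0)
        + (∑ k : Fin M, ∑ k' : Fin M, if k < k' then
            ((g - 1) / g) / (2 * Real.sin ((u (Fin.natAdd N k) - u (Fin.natAdd N k')) / 2) ^ 2)
          else 0)
        + ∑ j : Fin N, ∑ k : Fin M,
            (1 - g) / (2 * Real.sin ((u (Fin.castAdd M j) - u (Fin.natAdd N k)) / 2) ^ 2) : ℝ) : ℂ)
      * f u

/-- The dCS ground state `Ψ₀(x,y;g)` (with real powers). -/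
noncomputable def Psi0 (N M : ℕ) (g : ℝ) (u : Fin (N + M) → ℝ) : ℝ :=
  ((∏ j : Fin N, ∏ j' : Fin N, if j < j' then
      Real.sin ((u (Fin.castAdd M j) - u (Fin.castAdd M j')) / 2) else 1) ^ g)
    * ((∏ k : Fin M, ∏ k' : Fin M, if k < k' then
        Real.sin ((u (Fin.natAdd N k) - u (Fin.natAdd N k')) / 2) else 1) ^ (1 / g))
    / ∏ j : Fin N, ∏ k : Fin M, Real.sin ((u (Fin.castAdd M j) - u (Fin.natAdd N k)) / 2)

/-- The open region `U = {π > x_1 > ⋯ > x_N > y_1 > ⋯ > y_M > −π}`. -/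
def regionU (N M : ℕ) : Set (Fin (N + M) → ℝ) :=
  {u | (∀ i, u i ∈ Set.Ioo (-Real.pi) Real.pi) ∧ StrictAnti u}

/-!
On `U` the ground state is a Jastrow product: `Ψ₀ = exp Φ` with
`Φ = (1/2g) ∑_{a ≠ b} p_a p_b log sin((u_a - u_b)/2)`, where `p = g` on the `x`'s and `p = -1` on
the `y`'s, and the potential is `(g-1)/(4g) ∑_{a ≠ b} p_a p_b / sin²((u_a - u_b)/2)`. Hence
`∂ᵢ²Ψ₀ / Ψ₀ = ∂ᵢ²Φ + (∂ᵢΦ)²` is a combination of `cot` and `1/sin²` terms. Expanding the square,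
the two-body `1/sin²` terms cancel against the potential (case by case over `p_a, p_b ∈ {g, -1}`),
and the three-body terms `cot · cot`, summed over distinct triples, collapse to constants by
`cot x cot y + cot y cot z + cot z cot x = 1` for `x + y + z = 0`. What remains is the symmetric
function `((∑ p)³ - ∑ p³) / (12 g)` of the weights, which is `E₀`.
-/

open Function Real Filter Topology

section PairSums

variable {ι : Type*} [Fintype ι]

theorem sum_sum_eq_two_mul_sum_lt [LinearOrder ι] {R : Type*} [CommRing R] {F : ι → ι → R}
    (hF : ∀ a b, F b a = F a b) (hF0 : ∀ a, F a a = 0) :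
    ∑ a, ∑ b, F a b = 2 * ∑ a, ∑ b, if a < b then F a b else 0 := by
  have hsplit : ∀ a b, F a b = (if a < b then F a b else 0) + (if b < a then F b a else 0) := by
    intro a b
    rcases lt_trichotomy a b with h | rfl | h
    · simp [h, h.not_gt]
    · simp [hF0]
    · simp [h, h.not_gt, hF]
  rw [Finset.sum_congr rfl fun a _ => Finset.sum_congr rfl fun b _ => hsplit a b]
  simp only [Finset.sum_add_distrib]
  rw [Finset.sum_comm (f := fun a b => if b < a then F b a else 0)]
  ring

theorem sum_sum_mul_eq_zero_of_antisymm {R : Type*} [Ring R] [NoZeroDivisors R] [CharZero R]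
    {W Q : ι → ι → R} (hW : ∀ a b, W b a = -W a b) (hQ : ∀ a b, Q b a = Q a b) :
    ∑ a, ∑ b, W a b * Q a b = 0 := by
  have hswap : ∑ a, ∑ b, W a b * Q a b = ∑ a, ∑ b, W b a * Q b a := Finset.sum_comm
  have hneg : ∑ a, ∑ b, W b a * Q b a = -∑ a, ∑ b, W a b * Q a b := by
    simp only [← Finset.sum_neg_distrib]
    exact Finset.sum_congr rfl fun a _ => Finset.sum_congr rfl fun b _ => by
      rw [hW a b, hQ a b, neg_mul]
  exact self_eq_neg.mp (hswap.trans hneg)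

variable [DecidableEq ι]

theorem sum_sum_mul_single_sub_single {R : Type*} [CommRing R] {X : ι → ι → R}
    (hX : ∀ a b, X b a = -X a b) (i : ι) :
    ∑ a, ∑ b, X a b * ((Pi.single i 1 : ι → R) a - (Pi.single i 1 : ι → R) b)
      = 2 * ∑ b, X i b := by
  simp only [mul_sub, Finset.sum_sub_distrib, Pi.single_apply, mul_ite, mul_one, mul_zero,
    Finset.sum_ite_eq', Finset.mem_univ, if_true, Finset.sum_ite_irrel, Finset.sum_const_zero]
  rw [Finset.sum_congr rfl fun b _ => hX i b, Finset.sum_neg_distrib]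
  ring

theorem sum_distinct_triples_mul {R : Type*} [CommRing R] (p : ι → R) :
    ∑ a, ∑ b, ∑ c, (if a ≠ b ∧ b ≠ c ∧ c ≠ a then p a * p b * p c else 0)
      = (∑ a, p a) ^ 3 - 3 * (∑ a, p a) * (∑ a, p a ^ 2) + 2 * ∑ a, p a ^ 3 := by
  have inclusion_exclusion : ∀ a b c : ι,
      (if a ≠ b ∧ b ≠ c ∧ c ≠ a then p a * p b * p c else 0)
        = p a * p b * p c - (if a = b then p a * p b * p c else 0)
          - (if b = c then p a * p b * p c else 0) - (if c = a then p a * p b * p c else 0)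
          + 2 * (if a = b then if b = c then p a * p b * p c else 0 else 0) := by
    intro a b c
    by_cases hab : a = b <;> by_cases hbc : b = c <;> by_cases hca : c = a <;> simp_all; ring
  have hcube : ∀ a, p a ^ 3 = p a * (p a * p a) := fun a => by ring
  simp only [inclusion_exclusion, Finset.sum_add_distrib, Finset.sum_sub_distrib, ← Finset.mul_sum]
  simp only [← Finset.sum_mul, ← Finset.mul_sum, Finset.sum_ite_irrel, Finset.sum_const_zero,
    Finset.sum_ite_eq, Finset.sum_ite_eq', Finset.mem_univ, if_true]
  simp only [mul_assoc, ← Finset.mul_sum, ← Finset.sum_mul, mul_comm _ (∑ i, p i),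
    mul_left_comm _ (∑ i, p i), sq, hcube]
  ring

end PairSums

theorem Fin.castAdd_lt_castAdd_iff {N M : ℕ} {j j' : Fin N} :
    Fin.castAdd M j < Fin.castAdd M j' ↔ j < j' := by
  simp only [Fin.lt_def, Fin.val_castAdd]

theorem Fin.castAdd_lt_natAdd {N M : ℕ} (j : Fin N) (k : Fin M) :
    Fin.castAdd M j < Fin.natAdd N k := by
  simp only [Fin.lt_def, Fin.val_castAdd, Fin.val_natAdd]
  omega

theorem sum_lt_fin_add {N M : ℕ} {R : Type*} [AddCommMonoid R]
    (F : Fin (N + M) → Fin (N + M) → R) :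
    ∑ a, ∑ b, (if a < b then F a b else 0)
      = (∑ j : Fin N, ∑ j' : Fin N,
          if j < j' then F (Fin.castAdd M j) (Fin.castAdd M j') else 0)
        + (∑ k : Fin M, ∑ k' : Fin M,
          if k < k' then F (Fin.natAdd N k) (Fin.natAdd N k') else 0)
        + ∑ j : Fin N, ∑ k : Fin M, F (Fin.castAdd M j) (Fin.natAdd N k) := by
  have hnot : ∀ (j : Fin N) (k : Fin M), ¬ Fin.natAdd N k < Fin.castAdd M j :=
    fun j k => (Fin.castAdd_lt_natAdd j k).not_gt
  simp only [Fin.sum_univ_add, Finset.sum_add_distrib, Fin.castAdd_lt_castAdd_iff, hnot,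
    if_false, Finset.sum_const_zero, add_zero, Fin.castAdd_lt_natAdd, if_true,
    Fin.natAdd_lt_natAdd_iff]
  abel

section CotangentSumRule

variable {ι : Type*} [Fintype ι] [DecidableEq ι] {p : ι → ℝ} {C Q : ι → ι → ℝ}

theorem sum_distinct_triples_cot (hC : ∀ a b, C b a = -C a b)
    (htri : ∀ a b c, a ≠ b → b ≠ c → c ≠ a → C a b * C b c + C b c * C c a + C c a * C a b = 1) :
    3 * ∑ a, ∑ b, ∑ c,
        (if a ≠ b ∧ b ≠ c ∧ c ≠ a then p a * p b * p c * (C a b * C a c) else 0)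
      = -∑ a, ∑ b, ∑ c, (if a ≠ b ∧ b ≠ c ∧ c ≠ a then p a * p b * p c else 0) := by
  set D : ι → ι → ι → ℝ := fun a b c =>
    if a ≠ b ∧ b ≠ c ∧ c ≠ a then p a * p b * p c * (C a b * C a c) else 0 with hD
  have hswap : ∑ a, ∑ b, ∑ c, D b a c = ∑ a, ∑ b, ∑ c, D a b c := Finset.sum_comm
  have hrev : ∑ a, ∑ b, ∑ c, D c b a = ∑ a, ∑ b, ∑ c, D a b c :=
    calc ∑ a, ∑ b, ∑ c, D c b a = ∑ a, ∑ c, ∑ b, D c b a :=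
          Finset.sum_congr rfl fun _ _ => Finset.sum_comm
      _ = ∑ c, ∑ a, ∑ b, D c b a := Finset.sum_comm
      _ = ∑ a, ∑ b, ∑ c, D a b c := Finset.sum_congr rfl fun _ _ => Finset.sum_comm
  have hcyclic : ∀ a b c, D a b c + D b a c + D c b a
      = -(if a ≠ b ∧ b ≠ c ∧ c ≠ a then p a * p b * p c else 0) := by
    intro a b c
    by_cases h : a ≠ b ∧ b ≠ c ∧ c ≠ a
    · obtain ⟨hab, hbc, hca⟩ := h
      simp only [hD, if_pos (⟨hab, hbc, hca⟩ : a ≠ b ∧ b ≠ c ∧ c ≠ a),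
        if_pos (⟨hab.symm, hca.symm, hbc.symm⟩ : b ≠ a ∧ a ≠ c ∧ c ≠ b),
        if_pos (⟨hbc.symm, hab.symm, hca.symm⟩ : c ≠ b ∧ b ≠ a ∧ a ≠ c)]
      rw [hC c a, hC a b, hC b c]
      linear_combination (-(p a * p b * p c)) * htri a b c hab hbc hca
    · have h' : ¬ (b ≠ a ∧ a ≠ c ∧ c ≠ b) := fun ⟨h1, h2, h3⟩ => h ⟨h1.symm, h3.symm, h2.symm⟩
      have h'' : ¬ (c ≠ b ∧ b ≠ a ∧ a ≠ c) := fun ⟨h1, h2, h3⟩ => h ⟨h2.symm, h1.symm, h3.symm⟩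
      simp only [hD, if_neg h, if_neg h', if_neg h'']
      ring
  calc 3 * ∑ a, ∑ b, ∑ c, D a b c
      = ∑ a, ∑ b, ∑ c, (D a b c + D b a c + D c b a) := by
        simp only [Finset.sum_add_distrib, hswap, hrev]; ring
    _ = _ := by simp only [hcyclic, Finset.sum_neg_distrib]

theorem sum_mul_sq_sum_eq (hC : ∀ a b, C b a = -C a b)
    (hQ0 : ∀ a, Q a a = 0) (hCQ : ∀ a b, a ≠ b → C a b ^ 2 = Q a b - 1)
    (htri : ∀ a b c, a ≠ b → b ≠ c → c ≠ a → C a b * C b c + C b c * C c a + C c a * C a b = 1) :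
    ∑ a, p a * (∑ b, p b * C a b) ^ 2
      = ∑ a, ∑ b, p a * p b ^ 2 * Q a b - (∑ a, p a) * (∑ a, p a ^ 2) + ∑ a, p a ^ 3
        - ((∑ a, p a) ^ 3 - 3 * (∑ a, p a) * (∑ a, p a ^ 2) + 2 * ∑ a, p a ^ 3) / 3 := by
  have hC0 : ∀ a, C a a = 0 := fun a => by linarith [hC a a]
  have hexpand : ∀ a, p a * (∑ b, p b * C a b) ^ 2
      = ∑ b, ∑ c, p a * ((p b * C a b) * (p c * C a c)) := fun a => by
    rw [sq, Finset.sum_mul_sum, Finset.mul_sum]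
    simp only [Finset.mul_sum]
  -- On the diagonal `b = c` we use `C² = Q - 1`; the correction `p a ^ 3` at `a = b` accounts for
  -- `C a a = 0 ≠ Q a a - 1`.
  have hpoint : ∀ a b c, p a * ((p b * C a b) * (p c * C a c))
      = (if b = c then p a * p b ^ 2 * Q a b - p a * p b ^ 2 + (if a = b then p a ^ 3 else 0)
          else 0)
        + (if a ≠ b ∧ b ≠ c ∧ c ≠ a then p a * p b * p c * (C a b * C a c) else 0) := by
    intro a b c
    by_cases hbc : b = c
    · subst hbc
      by_cases hab : a = b
      · subst hab
        simp only [hC0, hQ0, mul_zero, if_true, zero_sub, ne_eq, not_true_eq_false, and_self,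
          if_false, add_zero]
        ring
      · rw [if_pos rfl, if_neg hab, if_neg (fun h => h.2.1 rfl)]
        linear_combination (p a * p b ^ 2) * hCQ a b hab
    · by_cases hab : a = b
      · subst hab; simp [hC0, hbc]
      · by_cases hca : c = a
        · subst hca; simp [hC0, hbc]
        · simp only [hbc, hab, hca, if_false, ne_eq, not_false_eq_true, and_self, if_true,
            zero_add]
          ring
  have hdistinct := sum_distinct_triples_cot (p := p) hC htri
  rw [sum_distinct_triples_mul] at hdistinct
  simp only [hexpand, hpoint, Finset.sum_add_distrib, Finset.sum_ite_eq, Finset.mem_univ, if_true]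
  simp only [Finset.sum_sub_distrib, ← Finset.mul_sum, ← Finset.sum_mul]
  linear_combination hdistinct / 3

theorem dcs_energy_identity {g : ℝ} (hg : g ≠ 0) (hp : ∀ a, p a = g ∨ p a = -1)
    (hC : ∀ a b, C b a = -C a b) (hQ : ∀ a b, Q b a = Q a b)
    (hQ0 : ∀ a, Q a a = 0) (hCQ : ∀ a b, a ≠ b → C a b ^ 2 = Q a b - 1)
    (htri : ∀ a b c, a ≠ b → b ≠ c → c ≠ a → C a b * C b c + C b c * C c a + C c a * C a b = 1) :
    ∑ a, -(g / p a) * (-(1 / 4) * ∑ b, p a * p b / g * Q a b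
        + ((1 / 2) * ∑ b, p a * p b / g * C a b) ^ 2)
      + (1 / 2) * ∑ a, ∑ b, (g - 1) / (2 * g) * (p a * p b) * Q a b
      = ((∑ a, p a) ^ 3 - ∑ a, p a ^ 3) / (12 * g) := by
  have hp0 : ∀ a, p a ≠ 0 := fun a => by
    rcases hp a with h | h <;> rw [h]
    exacts [hg, by norm_num]
  have hterm : ∀ a, -(g / p a) * (-(1 / 4) * ∑ b, p a * p b / g * Q a b
        + ((1 / 2) * ∑ b, p a * p b / g * C a b) ^ 2)
      = (1 / 4) * ∑ b, p b * Q a b - 1 / (4 * g) * (p a * (∑ b, p b * C a b) ^ 2) := fun a => by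
    have hQa : ∑ b, p a * p b / g * Q a b = p a / g * ∑ b, p b * Q a b := by
      rw [Finset.mul_sum]
      exact Finset.sum_congr rfl fun b _ => by ring
    have hCa : ∑ b, p a * p b / g * C a b = p a / g * ∑ b, p b * C a b := by
      rw [Finset.mul_sum]
      exact Finset.sum_congr rfl fun b _ => by ring
    rw [hQa, hCa]
    field_simp [hp0 a]
    ring
  have hcancel : ∑ a, ∑ b, (p b / 4 - p a * p b ^ 2 / (4 * g) + (g - 1) * (p a * p b) / (4 * g))
      * Q a b = 0 := by
    refine sum_sum_mul_eq_zero_of_antisymm (fun a b => ?_) hQ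
    rcases hp a with ha | ha <;> rcases hp b with hb | hb <;> rw [ha, hb] <;> field_simp <;> ring
  have hcollect : (1 / 4) * ∑ a, ∑ b, p b * Q a b
      - 1 / (4 * g) * ∑ a, ∑ b, p a * p b ^ 2 * Q a b
      + (1 / 2) * ∑ a, ∑ b, (g - 1) / (2 * g) * (p a * p b) * Q a b
      = ∑ a, ∑ b, (p b / 4 - p a * p b ^ 2 / (4 * g) + (g - 1) * (p a * p b) / (4 * g))
        * Q a b := by
    simp only [Finset.mul_sum, ← Finset.sum_sub_distrib, ← Finset.sum_add_distrib]
    refine Finset.sum_congr rfl fun a _ => Finset.sum_congr rfl fun b _ => ?_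
    ring
  rw [Finset.sum_congr rfl fun a _ => hterm a, Finset.sum_sub_distrib]
  simp only [← Finset.mul_sum]
  rw [sum_mul_sq_sum_eq hC hQ0 hCQ htri]
  linear_combination hcollect + hcancel

end CotangentSumRule

namespace Real

variable {x y z : ℝ}

theorem cot_neg (x : ℝ) : cot (-x) = -cot x := by
  rw [cot_eq_cos_div_sin, cot_eq_cos_div_sin, cos_neg, sin_neg, div_neg]

theorem sin_half_sub_swap (x y : ℝ) : sin ((y - x) / 2) = -sin ((x - y) / 2) := by
  rw [← neg_sub, neg_div, sin_neg]

theorem cot_half_sub_swap (x y : ℝ) : cot ((y - x) / 2) = -cot ((x - y) / 2) := by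
  rw [← neg_sub, neg_div, cot_neg]

theorem cot_sq_eq_inv_sin_sq_sub_one (hx : sin x ≠ 0) : cot x ^ 2 = (sin x ^ 2)⁻¹ - 1 := by
  rw [cot_eq_cos_div_sin]
  field_simp
  linarith [sin_sq_add_cos_sq x]

theorem cot_mul_cot_add_cyclic (hxyz : x + y + z = 0) (hx : sin x ≠ 0) (hy : sin y ≠ 0)
    (hz : sin z ≠ 0) : cot x * cot y + cot y * cot z + cot z * cot x = 1 := by
  obtain rfl : z = -(x + y) := by linarith
  rw [sin_neg, neg_ne_zero, sin_add] at hz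
  rw [cot_neg, cot_eq_cos_div_sin, cot_eq_cos_div_sin, cot_eq_cos_div_sin, cos_add, sin_add]
  field_simp
  ring

theorem hasDerivAt_log_sin_half (hx : sin (x / 2) ≠ 0) :
    HasDerivAt (fun s => log (sin (s / 2))) (cot (x / 2) / 2) x := by
  have h := ((hasDerivAt_id' x).div_const 2).sin.log hx
  convert h using 1
  rw [cot_eq_cos_div_sin]
  ring

theorem hasDerivAt_cot_half (hx : sin (x / 2) ≠ 0) :
    HasDerivAt (fun s => cot (s / 2)) (-(sin (x / 2) ^ 2)⁻¹ / 2) x := by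
  have hhalf := (hasDerivAt_id' x).div_const 2
  have h := hhalf.cos.div hhalf.sin hx
  rw [show (fun s => cot (s / 2)) = fun s => cos (s / 2) / sin (s / 2) from
    funext fun s => cot_eq_cos_div_sin _]
  refine h.congr_deriv ?_
  field_simp
  linear_combination -sin_sq_add_cos_sq (x / 2)

end Real

section Jastrow

variable {ι : Type*} [DecidableEq ι]

theorem hasDerivAt_comp_update_sub {F : ℝ → ℝ} {F' : ℝ} {u : ι → ℝ} {i a b : ι} {t : ℝ}
    (hF : a ≠ b → HasDerivAt F F' (update u i t a - update u i t b)) :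
    HasDerivAt (fun s => F (update u i s a - update u i s b))
      (F' * ((Pi.single i 1 : ι → ℝ) a - (Pi.single i 1 : ι → ℝ) b)) t := by
  by_cases hab : a = b
  · subst hab
    simpa using hasDerivAt_const t (F 0)
  · have hupd := hasDerivAt_pi.1 (hasDerivAt_update u i t)
    exact (hF hab).comp t ((hupd a).sub (hupd b))

variable [Fintype ι]

/- For symmetric `w`, `logJastrow w v = log ∏_{a<b} |sin((v_a - v_b)/2)| ^ w_ab`. In this and the
next two sums the diagonal terms vanish through the conventions `log 0 = 0`, `cot 0 = 0`,
`0⁻¹ = 0`. -/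
noncomputable def logJastrow (w : ι → ι → ℝ) (v : ι → ℝ) : ℝ :=
  (1 / 2) * ∑ a, ∑ b, w a b * log (sin ((v a - v b) / 2))

noncomputable def logJastrowDeriv (w : ι → ι → ℝ) (v : ι → ℝ) (i : ι) : ℝ :=
  (1 / 2) * ∑ b, w i b * cot ((v i - v b) / 2)

noncomputable def logJastrowDeriv2 (w : ι → ι → ℝ) (v : ι → ℝ) (i : ι) : ℝ :=
  -(1 / 4) * ∑ b, w i b * (sin ((v i - v b) / 2) ^ 2)⁻¹

variable {w : ι → ι → ℝ} {u : ι → ℝ} {i : ι} {t : ℝ}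

theorem hasDerivAt_logJastrow_update (hw : ∀ a b, w b a = w a b)
    (hsin : ∀ a b, a ≠ b → sin ((update u i t a - update u i t b) / 2) ≠ 0) :
    HasDerivAt (fun s => logJastrow w (update u i s)) (logJastrowDeriv w (update u i t) i) t := by
  set v := update u i t
  have hterm : ∀ a b, HasDerivAt
      (fun s => w a b * log (sin ((update u i s a - update u i s b) / 2)))
      (w a b * (cot ((v a - v b) / 2) / 2
        * ((Pi.single i 1 : ι → ℝ) a - (Pi.single i 1 : ι → ℝ) b))) t :=
    fun a b => (hasDerivAt_comp_update_sub (F := fun s => log (sin (s / 2)))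
      fun h => hasDerivAt_log_sin_half (hsin a b h)).const_mul (w a b)
  refine ((HasDerivAt.fun_sum (u := univ) fun a _ =>
    HasDerivAt.fun_sum (u := univ) fun b _ => hterm a b).const_mul (1 / 2)).congr_deriv ?_
  have hodd := sum_sum_mul_single_sub_single (X := fun a b => w a b * cot ((v a - v b) / 2))
    (fun a b => by rw [hw, cot_half_sub_swap, mul_neg]) i
  have hhalf : ∑ a, ∑ b, w a b * (cot ((v a - v b) / 2) / 2
        * ((Pi.single i 1 : ι → ℝ) a - (Pi.single i 1 : ι → ℝ) b))
      = (1 / 2) * ∑ a, ∑ b, w a b * cot ((v a - v b) / 2)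
        * ((Pi.single i 1 : ι → ℝ) a - (Pi.single i 1 : ι → ℝ) b) := by
    simp only [Finset.mul_sum]
    exact Finset.sum_congr rfl fun a _ => Finset.sum_congr rfl fun b _ => by ring
  rw [hhalf, hodd, logJastrowDeriv]
  ring

theorem hasDerivAt_logJastrowDeriv_update
    (hsin : ∀ a b, a ≠ b → sin ((update u i t a - update u i t b) / 2) ≠ 0) :
    HasDerivAt (fun s => logJastrowDeriv w (update u i s) i)
      (logJastrowDeriv2 w (update u i t) i) t := by
  have hterm : ∀ b, HasDerivAt (fun s => w i b * cot ((update u i s i - update u i s b) / 2))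
      (w i b * (-(sin ((update u i t i - update u i t b) / 2) ^ 2)⁻¹ / 2
        * ((Pi.single i 1 : ι → ℝ) i - (Pi.single i 1 : ι → ℝ) b))) t :=
    fun b => (hasDerivAt_comp_update_sub (F := fun s => cot (s / 2))
      fun h => hasDerivAt_cot_half (hsin i b h)).const_mul (w i b)
  refine ((HasDerivAt.fun_sum (u := univ) fun b _ => hterm b).const_mul (1 / 2)).congr_deriv ?_
  rw [logJastrowDeriv2, Finset.mul_sum, Finset.mul_sum]
  refine Finset.sum_congr rfl fun b _ => ?_
  by_cases hb : b = i
  · subst hb; simp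
  · simp only [update_self, update_of_ne hb, Pi.single_eq_same, Pi.single_eq_of_ne hb, sub_zero,
      mul_one]
    ring

end Jastrow

theorem pd_pd_apply {n : ℕ} (f : (Fin n → ℝ) → ℂ) (u : Fin n → ℝ) (i : Fin n) :
    pd i (pd i f) u = deriv (deriv fun t => f (update u i t)) (u i) := by
  simp only [pd, update_idem, update_self]

theorem deriv_deriv_ofReal_exp_of_eventuallyEq {f : ℝ → ℂ} {G A : ℝ → ℝ} {B x : ℝ}
    (hf : f =ᶠ[𝓝 x] fun t => (exp (G t) : ℂ)) (hG : ∀ᶠ t in 𝓝 x, HasDerivAt G (A t) t)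
    (hA : HasDerivAt A B x) :
    deriv (deriv f) x = (((B + A x ^ 2) * exp (G x) : ℝ) : ℂ) := by
  have hf' : deriv f =ᶠ[𝓝 x] fun t => ((exp (G t) * A t : ℝ) : ℂ) := by
    filter_upwards [hf.eventuallyEq_nhds, hG] with t hft hGt
    rw [hft.deriv_eq]
    exact hGt.exp.ofReal_comp.deriv
  have hd : HasDerivAt (fun t => ((exp (G t) * A t : ℝ) : ℂ))
      (((exp (G x) * A x * A x + exp (G x) * B : ℝ)) : ℂ) x :=
    (hG.self_of_nhds.exp.mul hA).ofReal_comp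
  rw [hf'.deriv_eq, hd.deriv]
  push_cast
  ring

theorem pd_pd_ofReal_eq_of_eqOn_exp_logJastrow {n : ℕ} {U : Set (Fin n → ℝ)} (hU : IsOpen U)
    (hsinU : ∀ v ∈ U, ∀ a b, a ≠ b → sin ((v a - v b) / 2) ≠ 0) {w : Fin n → Fin n → ℝ}
    (hw : ∀ a b, w b a = w a b) {ψ : (Fin n → ℝ) → ℝ} (hψ : ∀ v ∈ U, ψ v = exp (logJastrow w v))
    {u : Fin n → ℝ} (hu : u ∈ U) (i : Fin n) :
    pd i (pd i fun v => (ψ v : ℂ)) u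
      = (((logJastrowDeriv2 w u i + logJastrowDeriv w u i ^ 2) * ψ u : ℝ) : ℂ) := by
  have hcont : ContinuousAt (fun t => update u i t) (u i) :=
    (continuous_const.update i continuous_id).continuousAt
  have hline : ∀ᶠ t in 𝓝 (u i), update u i t ∈ U :=
    hcont.eventually_mem (by rw [update_eq_self]; exact hU.mem_nhds hu)
  have h := deriv_deriv_ofReal_exp_of_eventuallyEq
    (f := fun t => (ψ (update u i t) : ℂ)) (G := fun t => logJastrow w (update u i t))
    (hline.mono fun t ht => by simp only [hψ _ ht])
    (hline.mono fun t ht => hasDerivAt_logJastrow_update hw (hsinU _ ht))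
    (hasDerivAt_logJastrowDeriv_update (hsinU _ (by rwa [update_eq_self])))
  rw [pd_pd_apply, h, update_eq_self, hψ u hu]

section DeformedCalogeroSutherland

variable {N M : ℕ} {g : ℝ}

def dcsWeight (N : ℕ) (g : ℝ) {n : ℕ} (i : Fin n) : ℝ := if (i : ℕ) < N then g else -1

@[simp]
theorem dcsWeight_castAdd (j : Fin N) : dcsWeight N g (Fin.castAdd M j) = g := by
  simp [dcsWeight]

@[simp]
theorem dcsWeight_natAdd (k : Fin M) : dcsWeight N g (Fin.natAdd N k) = -1 := by
  simp [dcsWeight]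

theorem dcsWeight_eq_or {n : ℕ} (i : Fin n) : dcsWeight N g i = g ∨ dcsWeight N g i = -1 := by
  unfold dcsWeight
  split_ifs <;> simp

theorem sum_dcsWeight : ∑ i : Fin (N + M), dcsWeight N g i = N * g - M := by
  simp [Fin.sum_univ_add, sub_eq_add_neg]

theorem sum_dcsWeight_pow (k : ℕ) :
    ∑ i : Fin (N + M), dcsWeight N g i ^ k = N * g ^ k + M * (-1) ^ k := by
  simp [Fin.sum_univ_add]

theorem sum_neg_div_dcsWeight_mul (hg : g ≠ 0) (X : Fin (N + M) → ℝ) :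
    ∑ i, -(g / dcsWeight N g i) * X i
      = -∑ j, X (Fin.castAdd M j) + g * ∑ k, X (Fin.natAdd N k) := by
  simp only [Fin.sum_univ_add, dcsWeight_castAdd, dcsWeight_natAdd, div_self hg, div_neg, div_one,
    neg_neg, Finset.mul_sum]
  simp only [neg_mul, one_mul, Finset.sum_neg_distrib]

theorem half_sum_sum_dcsWeight_mul {K : Fin (N + M) → Fin (N + M) → ℝ}
    (hK : ∀ a b, K b a = K a b) (hK0 : ∀ a, K a a = 0) :
    (1 / 2) * ∑ a, ∑ b, dcsWeight N g a * dcsWeight N g b * K a b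
      = g ^ 2 * (∑ j : Fin N, ∑ j' : Fin N,
          if j < j' then K (Fin.castAdd M j) (Fin.castAdd M j') else 0)
        + (∑ k : Fin M, ∑ k' : Fin M,
          if k < k' then K (Fin.natAdd N k) (Fin.natAdd N k') else 0)
        - g * ∑ j : Fin N, ∑ k : Fin M, K (Fin.castAdd M j) (Fin.natAdd N k) := by
  rw [sum_sum_eq_two_mul_sum_lt (fun a b => by rw [hK]; ring) (fun a => by simp [hK0]),
    sum_lt_fin_add]
  simp only [dcsWeight_castAdd, dcsWeight_natAdd, ← sq, neg_one_sq, one_mul, mul_neg_one, neg_mul,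
    Finset.sum_neg_distrib, Finset.mul_sum, mul_ite, mul_zero]
  ring

theorem sin_half_sub_pos_of_mem_regionU {u : Fin (N + M) → ℝ} (hu : u ∈ regionU N M)
    {a b : Fin (N + M)} (hab : a < b) : 0 < sin ((u a - u b) / 2) := by
  obtain ⟨hIoo, hanti⟩ := hu
  have := hanti hab
  have := (hIoo a).2
  have := (hIoo b).1
  exact sin_pos_of_pos_of_lt_pi (by linarith) (by linarith)

theorem sin_half_sub_ne_zero_of_mem_regionU {u : Fin (N + M) → ℝ} (hu : u ∈ regionU N M)
    {a b : Fin (N + M)} (hab : a ≠ b) : sin ((u a - u b) / 2) ≠ 0 := by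
  rcases hab.lt_or_gt with h | h
  · exact (sin_half_sub_pos_of_mem_regionU hu h).ne'
  · rw [sin_half_sub_swap, neg_ne_zero]
    exact (sin_half_sub_pos_of_mem_regionU hu h).ne'

theorem isOpen_regionU (N M : ℕ) : IsOpen (regionU N M) := by
  have hbox : IsOpen {u : Fin (N + M) → ℝ | ∀ i, u i ∈ Set.Ioo (-π) π} := by
    simp only [Set.ofPred_forall]
    exact isOpen_iInter_of_finite fun i => isOpen_Ioo.preimage (continuous_apply i)
  have hanti : IsOpen {u : Fin (N + M) → ℝ | StrictAnti u} := by
    simp only [StrictAnti, Set.ofPred_forall]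
    exact isOpen_iInter_of_finite fun a => isOpen_iInter_of_finite fun b =>
      isOpen_iInter_of_finite fun _ => isOpen_lt (continuous_apply b) (continuous_apply a)
  exact hbox.inter hanti

theorem prod_prod_rpow_eq_exp {α β : Type*} [Fintype α] [Fintype β] {f : α → β → ℝ}
    (hf : ∀ a b, 0 < f a b) (c : ℝ) :
    (∏ a, ∏ b, f a b) ^ c = exp (c * ∑ a, ∑ b, log (f a b)) := by
  rw [rpow_def_of_pos (prod_pos fun a _ => prod_pos fun b _ => hf a b), mul_comm,
    log_prod fun a _ => (prod_pos fun b _ => hf a b).ne']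
  congr 2
  exact sum_congr rfl fun a _ => log_prod fun b _ => (hf a b).ne'

theorem Psi0_eq_exp_logJastrow (hg : g ≠ 0) {u : Fin (N + M) → ℝ} (hu : u ∈ regionU N M) :
    Psi0 N M g u = exp (logJastrow (fun a b => dcsWeight N g a * dcsWeight N g b / g) u) := by
  have hpos : ∀ {a b : Fin (N + M)}, a < b → 0 < sin ((u a - u b) / 2) :=
    sin_half_sub_pos_of_mem_regionU hu
  have hA : ∀ j j' : Fin N,
      0 < if j < j' then sin ((u (Fin.castAdd M j) - u (Fin.castAdd M j')) / 2) else 1 :=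
    fun j j' => by
      split_ifs with h
      · exact hpos (Fin.castAdd_lt_castAdd_iff.2 h)
      · exact one_pos
  have hB : ∀ k k' : Fin M,
      0 < if k < k' then sin ((u (Fin.natAdd N k) - u (Fin.natAdd N k')) / 2) else 1 :=
    fun k k' => by
      split_ifs with h
      · exact hpos ((Fin.natAdd_lt_natAdd_iff N).2 h)
      · exact one_pos
  have hC := prod_prod_rpow_eq_exp
    (fun (j : Fin N) (k : Fin M) => hpos (Fin.castAdd_lt_natAdd j k)) 1
  rw [rpow_one, one_mul] at hC
  have hlogJ : logJastrow (fun a b => dcsWeight N g a * dcsWeight N g b / g) u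
      = 1 / g * ((1 / 2) * ∑ a, ∑ b, dcsWeight N g a * dcsWeight N g b
          * log (sin ((u a - u b) / 2))) := by
    simp only [logJastrow, Finset.mul_sum]
    exact sum_congr rfl fun a _ => sum_congr rfl fun b _ => by ring
  rw [Psi0, prod_prod_rpow_eq_exp hA, prod_prod_rpow_eq_exp hB, hC, ← exp_add, ← exp_sub, hlogJ,
    half_sum_sum_dcsWeight_mul (fun a b => by rw [sin_half_sub_swap, log_neg_eq_log])
      (fun a => by simp)]
  congr 1
  simp only [apply_ite log, log_one]
  field_simp

theorem dcs_potential_eq (hg : g ≠ 0) (u : Fin (N + M) → ℝ) :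
    (∑ j : Fin N, ∑ j' : Fin N, if j < j' then
          g * (g - 1) / (2 * Real.sin ((u (Fin.castAdd M j) - u (Fin.castAdd M j')) / 2) ^ 2)
        else 0)
      + (∑ k : Fin M, ∑ k' : Fin M, if k < k' then
          ((g - 1) / g) / (2 * Real.sin ((u (Fin.natAdd N k) - u (Fin.natAdd N k')) / 2) ^ 2)
        else 0)
      + ∑ j : Fin N, ∑ k : Fin M,
          (1 - g) / (2 * Real.sin ((u (Fin.castAdd M j) - u (Fin.natAdd N k)) / 2) ^ 2)
      = (1 / 2) * ∑ a, ∑ b, (g - 1) / (2 * g) * (dcsWeight N g a * dcsWeight N g b)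
          * (sin ((u a - u b) / 2) ^ 2)⁻¹ := by
  have hpull : (1 / 2) * ∑ a, ∑ b, (g - 1) / (2 * g) * (dcsWeight N g a * dcsWeight N g b)
        * (sin ((u a - u b) / 2) ^ 2)⁻¹
      = (g - 1) / (2 * g) * ((1 / 2) * ∑ a, ∑ b, dcsWeight N g a * dcsWeight N g b
        * (sin ((u a - u b) / 2) ^ 2)⁻¹) := by
    simp only [Finset.mul_sum]
    exact sum_congr rfl fun a _ => sum_congr rfl fun b _ => by ring
  rw [hpull, half_sum_sum_dcsWeight_mul
    (fun a b => by rw [sin_half_sub_swap, neg_sq]) (fun a => by simp)]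
  simp only [mul_add, Finset.mul_sum, mul_ite, mul_zero, sub_eq_add_neg,
    ← Finset.sum_neg_distrib]
  refine congrArg₂ (· + ·) (congrArg₂ (· + ·) ?_ ?_) ?_ <;>
    refine sum_congr rfl fun _ _ => sum_congr rfl fun _ _ => ?_
  · split_ifs <;> field_simp
  · split_ifs <;> field_simp
  · field_simp
    ring

end DeformedCalogeroSutherland

/-- On `U`, the dCS ground state `Ψ₀` is a pointwise eigenfunction of the deformed
Calogero–Sutherland operator with eigenvalue `E₀ = (g²/12)·[(N − M/g)³ − (N − M/g³)]`. -/
theorem groundstate_eigenfunction (N M : ℕ) (g : ℝ) (hg : 0 < g)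
    (u : Fin (N + M) → ℝ) (hu : u ∈ regionU N M) :
    HNM N M g (fun v => (Psi0 N M g v : ℂ)) u
      = ((g ^ 2 / 12 * (((N : ℝ) - M / g) ^ 3 - ((N : ℝ) - M / g ^ 3)) : ℝ) : ℂ)
          * (Psi0 N M g u : ℂ) := by
  set p : Fin (N + M) → ℝ := dcsWeight N g
  set w : Fin (N + M) → Fin (N + M) → ℝ := fun a b => p a * p b / g
  set X : Fin (N + M) → ℝ := fun i => logJastrowDeriv2 w u i + logJastrowDeriv w u i ^ 2
  have hsin : ∀ {a b}, a ≠ b → sin ((u a - u b) / 2) ≠ 0 := sin_half_sub_ne_zero_of_mem_regionU hu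
  have hsecond : ∀ i, pd i (pd i fun v => (Psi0 N M g v : ℂ)) u = ((X i * Psi0 N M g u : ℝ) : ℂ) :=
    pd_pd_ofReal_eq_of_eqOn_exp_logJastrow (isOpen_regionU N M)
      (fun v hv a b => sin_half_sub_ne_zero_of_mem_regionU hv) (fun a b => by ring)
      (fun v hv => Psi0_eq_exp_logJastrow hg.ne' hv) hu
  have henergy : ∑ i, -(g / p i) * X i
      + (1 / 2) * ∑ a, ∑ b, (g - 1) / (2 * g) * (p a * p b) * (sin ((u a - u b) / 2) ^ 2)⁻¹
      = ((∑ a, p a) ^ 3 - ∑ a, p a ^ 3) / (12 * g) :=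
    dcs_energy_identity hg.ne' dcsWeight_eq_or (fun a b => cot_half_sub_swap (u a) (u b))
      (fun a b => by rw [sin_half_sub_swap, neg_sq]) (fun a => by simp)
      (fun a b hab => cot_sq_eq_inv_sin_sq_sub_one (hsin hab))
      (fun a b c hab hbc hca => cot_mul_cot_add_cyclic (by ring) (hsin hab) (hsin hbc) (hsin hca))
  have hE0 : ((N * g - M) ^ 3 - (N * g ^ 3 + M * (-1) ^ 3)) / (12 * g)
      = g ^ 2 / 12 * (((N : ℝ) - M / g) ^ 3 - ((N : ℝ) - M / g ^ 3)) := by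
    field_simp
    ring
  rw [sum_neg_div_dcsWeight_mul hg.ne', ← dcs_potential_eq hg.ne', sum_dcsWeight,
    sum_dcsWeight_pow, hE0] at henergy
  simp only [HNM, hsecond]
  norm_cast
  rw [← Finset.sum_mul, ← Finset.sum_mul]
  linear_combination (Psi0 N M g u) * henergy
end

section
/- Let N, M ≥ 0 be integers, g > 0 and q₀ real numbers, and λ a partition in the fat (N,M)-hook. With n ∈ ℕ₀^{N+M} associated to λ as in the context and n_j⁺ the pseudo-momenta, one has ∑_{j=1}^{N} (n_j⁺)² − g ∑_{k=1}^{M} (n_{N+k}⁺)² = ∑_{j≥1} λ_j(λ_j + g(N+1−2j) − M) + 2q₀|λ| + q₀²(N − M/g) + (g²/12)·[(N − M/g)³ − (N − M/g³)]. -/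
open Finset

noncomputable def tailConj (N : ℕ) (lam : ℕ →₀ ℕ) (k : ℕ) : ℕ :=
  Set.ncard {i : ℕ | k ≤ lam (N + i)}

private lemma mem_iff_lt_card {s : Finset ℕ}
    (h : ∀ i j : ℕ, i ≤ j → j ∈ s → i ∈ s) (i : ℕ) : i ∈ s ↔ i < s.card := by
  constructor
  · intro hi
    have hsub : range (i + 1) ⊆ s := by
      intro j hj
      exact h j i (Nat.lt_succ_iff.mp (mem_range.mp hj)) hi
    have := card_le_card hsub
    simpa using this
  · intro hi
    by_contra hne
    have hsub : s ⊆ range i := by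
      intro j hj
      rw [mem_range]
      by_contra hji
      exact hne (h i j (le_of_not_gt hji) hj)
    have := card_le_card hsub
    rw [card_range] at this
    omega

private lemma sum_lin (c : ℕ) (a b : ℝ) :
    ∑ k ∈ range c, (a + b * (k : ℝ)) = c * a + b * (c * (c - 1) / 2) := by
  induction c with
  | zero => simp
  | succ n ih => rw [sum_range_succ, ih]; push_cast; ring

private lemma sum_sq_lin (c : ℕ) (a b : ℝ) :
    ∑ k ∈ range c, (a + b * (k : ℝ)) ^ 2
      = c * a ^ 2 + a * b * c * (c - 1) + b ^ 2 * c * (c - 1) * (2 * c - 1) / 6 := by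
  induction c with
  | zero => simp
  | succ n ih => rw [sum_range_succ, ih]; push_cast; ring

private lemma sum_odd (c : ℕ) (x : ℝ) :
    ∑ i ∈ range c, (2 * (i : ℝ) + 1 + x) = (c : ℝ) ^ 2 + c * x := by
  induction c with
  | zero => simp
  | succ n ih => rw [sum_range_succ, ih]; push_cast; ring

/-- Eigenvalue identity
`∑_{j=1}^N (n_j⁺)² − g ∑_{k=1}^M (n_{N+k}⁺)²
  = ∑_{j≥1} λ_j(λ_j + g(N+1−2j) − M) + 2q₀|λ| + q₀²(N − M/g)
    + (g²/12)[(N − M/g)³ − (N − M/g³)]`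
for the pseudo-momenta associated to a partition `λ` in the fat `(N,M)`-hook. -/
theorem pseudo_momenta_sum_sq (N M : ℕ) (g q₀ : ℝ) (hg : 0 < g) (lam : ℕ →₀ ℕ)
    (hdec : ∀ i j : ℕ, i ≤ j → lam j ≤ lam i) (hhook : lam N ≤ M) :
    (∑ j : Fin N,
        ((lam j : ℝ) + q₀ + g * ((N : ℝ) + 1 - 2 * ((j : ℕ) + 1)) / 2 - (M : ℝ) / 2) ^ 2)
      - g * (∑ k : Fin M, ((tailConj N lam ((k : ℕ) + 1) : ℝ) - q₀ / g
          + ((M : ℝ) + 1 - 2 * ((k : ℕ) + 1)) / (2 * g) + (N : ℝ) / 2) ^ 2)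
      = (∑ j ∈ lam.support,
            (lam j : ℝ) * ((lam j : ℝ) + g * ((N : ℝ) + 1 - 2 * ((j : ℕ) + 1)) - (M : ℝ)))
        + 2 * q₀ * (∑ j ∈ lam.support, (lam j : ℝ))
        + q₀ ^ 2 * ((N : ℝ) - (M : ℝ) / g)
        + g ^ 2 / 12 * (((N : ℝ) - M / g) ^ 3 - ((N : ℝ) - M / g ^ 3)) := by
  have hg' : g ≠ 0 := ne_of_gt hg
  set T : ℕ := lam.support.sup id + 1 with hTdef
  have hzero : ∀ i : ℕ, T ≤ i → lam i = 0 := by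
    intro i hi
    by_contra h0
    have hmem : i ∈ lam.support := Finsupp.mem_support_iff.mpr h0
    have := Finset.le_sup (f := id) hmem
    simp only [id] at this
    omega
  have hmM : ∀ i : ℕ, lam (N + i) ≤ M :=
    fun i => le_trans (hdec N (N + i) (Nat.le_add_right _ _)) hhook
  -- characterization of tailConj via a filter of an initial range
  have hfilter : ∀ k : ℕ,
      (range T).filter (fun i => k < lam (N + i)) = range (tailConj N lam (k + 1)) := by
    intro k
    set s := (range T).filter (fun i => k < lam (N + i)) with hs
    have hlow : ∀ i j : ℕ, i ≤ j → j ∈ s → i ∈ s := by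
      intro i j hij hj
      rw [hs, mem_filter, mem_range] at hj ⊢
      exact ⟨lt_of_le_of_lt hij hj.1, lt_of_lt_of_le hj.2 (hdec (N + i) (N + j) (by omega))⟩
    have hcard : tailConj N lam (k + 1) = s.card := by
      have hset : {i : ℕ | k + 1 ≤ lam (N + i)} = ↑s := by
        ext i
        simp only [hs, Set.mem_setOf_eq, coe_filter, mem_range, Set.mem_setOf_eq]
        constructor
        · intro hle
          refine ⟨?_, by omega⟩
          by_contra hT'
          have := hzero (N + i) (by omega)
          omega
        · rintro ⟨_, h2⟩; omega
      rw [tailConj, hset, Set.ncard_coe_finset]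
    ext i
    rw [mem_range, hcard]
    exact mem_iff_lt_card hlow i
  -- convert Fin sums to range sums
  rw [Fin.sum_univ_eq_sum_range
      (fun j => ((lam j : ℝ) + q₀ + g * ((N : ℝ) + 1 - 2 * ((j : ℕ) + 1)) / 2 - (M : ℝ) / 2) ^ 2)
      N,
    Fin.sum_univ_eq_sum_range
      (fun k => ((tailConj N lam (k + 1) : ℝ) - q₀ / g
          + ((M : ℝ) + 1 - 2 * ((k : ℕ) + 1)) / (2 * g) + (N : ℝ) / 2) ^ 2) M]
  -- step 1: rewrite each k-term of the second sum as a double sum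
  have hstep : ∀ k ∈ range M,
      ((tailConj N lam (k + 1) : ℝ) - q₀ / g
          + ((M : ℝ) + 1 - 2 * ((k : ℕ) + 1)) / (2 * g) + (N : ℝ) / 2) ^ 2
        = (∑ i ∈ range T, if k < lam (N + i) then
              (2 * (i : ℝ) + 1
                + 2 * (- (q₀ / g) + ((M : ℝ) + 1 - 2 * ((k : ℕ) + 1)) / (2 * g) + (N : ℝ) / 2))
            else 0)
          + (- (q₀ / g) + ((M : ℝ) + 1 - 2 * ((k : ℕ) + 1)) / (2 * g) + (N : ℝ) / 2) ^ 2 := by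
    intro k _
    rw [← Finset.sum_filter, hfilter k, sum_odd]
    ring
  rw [Finset.sum_congr rfl hstep, Finset.sum_add_distrib, Finset.sum_comm]
  -- step 2: per i, reduce the inner k-sum to range (lam (N+i))
  have hfil2 : ∀ i ∈ range T,
      (∑ k ∈ range M, if k < lam (N + i) then
          (2 * (i : ℝ) + 1
            + 2 * (- (q₀ / g) + ((M : ℝ) + 1 - 2 * ((k : ℕ) + 1)) / (2 * g) + (N : ℝ) / 2))
        else 0)
      = ∑ k ∈ range (lam (N + i)),
          (2 * (i : ℝ) + 1
            + 2 * (- (q₀ / g) + ((M : ℝ) + 1 - 2 * ((k : ℕ) + 1)) / (2 * g) + (N : ℝ) / 2)) := by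
    intro i _
    rw [← Finset.sum_filter]
    congr 1
    have hMi := hmM i
    ext k
    simp only [mem_filter, mem_range]
    omega
  rw [Finset.sum_congr rfl hfil2]
  -- abbreviations
  set F : ℕ → ℝ := fun j =>
    (lam j : ℝ) * ((lam j : ℝ) + g * ((N : ℝ) + 1 - 2 * ((j : ℕ) + 1)) - (M : ℝ)) with hF
  -- per-i closed form for the tail contribution
  have hBi : ∀ i ∈ range T,
      (∑ k ∈ range (lam (N + i)),
          (2 * (i : ℝ) + 1
            + 2 * (- (q₀ / g) + ((M : ℝ) + 1 - 2 * ((k : ℕ) + 1)) / (2 * g) + (N : ℝ) / 2)))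
        = - (F (N + i) + 2 * q₀ * (lam (N + i))) / g := by
    intro i _
    have hlin : ∀ k ∈ range (lam (N + i)),
        (2 * (i : ℝ) + 1
          + 2 * (- (q₀ / g) + ((M : ℝ) + 1 - 2 * ((k : ℕ) + 1)) / (2 * g) + (N : ℝ) / 2))
        = (2 * (i : ℝ) + 1 + 2 * (- (q₀ / g) + ((M : ℝ) - 1) / (2 * g) + (N : ℝ) / 2))
          + (-(2 / g)) * (k : ℝ) := by
      intro k _
      field_simp
      ring
    rw [Finset.sum_congr rfl hlin, sum_lin, hF]
    push_cast
    field_simp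
    ring
  rw [Finset.sum_congr rfl hBi]
  -- handle the RHS support sums
  have hsupp : lam.support ⊆ range (N + T) := by
    intro j hj
    rw [mem_range]
    have h0 : lam j ≠ 0 := Finsupp.mem_support_iff.mp hj
    by_contra hc
    exact h0 (hzero j (by omega))
  rw [show (∑ j ∈ lam.support, F j) = ∑ j ∈ range (N + T), F j from
      Finset.sum_subset hsupp (fun j _ hj => by
        rw [hF]; simp [Finsupp.notMem_support_iff.mp hj]),
    show (∑ j ∈ lam.support, (lam j : ℝ)) = ∑ j ∈ range (N + T), (lam j : ℝ) from
      Finset.sum_subset hsupp (fun j _ hj => by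
        simp [Finsupp.notMem_support_iff.mp hj]),
    Finset.sum_range_add F N T, Finset.sum_range_add (fun j => (lam j : ℝ)) N T]
  -- expand the first sum termwise
  have hA : ∀ j ∈ range N,
      ((lam j : ℝ) + q₀ + g * ((N : ℝ) + 1 - 2 * ((j : ℕ) + 1)) / 2 - (M : ℝ) / 2) ^ 2
        = F j + 2 * q₀ * (lam j)
          + (q₀ + g * ((N : ℝ) + 1 - 2 * ((j : ℕ) + 1)) / 2 - (M : ℝ) / 2) ^ 2 := by
    intro j _
    rw [hF]
    ring
  rw [Finset.sum_congr rfl hA, Finset.sum_add_distrib, Finset.sum_add_distrib]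
  -- linearity of the tail sum
  have hG : (∑ i ∈ range T, -(F (N + i) + 2 * q₀ * (lam (N + i) : ℝ)) / g)
      = (-(∑ i ∈ range T, F (N + i)) - 2 * q₀ * ∑ i ∈ range T, (lam (N + i) : ℝ)) / g := by
    rw [← Finset.sum_div]
    congr 1
    have hpt : ∀ i ∈ range T, -(F (N + i) + 2 * q₀ * (lam (N + i) : ℝ))
        = -F (N + i) + -(2 * q₀ * (lam (N + i) : ℝ)) := fun i _ => by ring
    rw [Finset.sum_congr rfl hpt, Finset.sum_add_distrib, Finset.sum_neg_distrib,
      Finset.sum_neg_distrib, Finset.mul_sum]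
    ring
  rw [hG]
  have hQ1 : (∑ j ∈ range N, 2 * q₀ * (lam j : ℝ)) = 2 * q₀ * ∑ j ∈ range N, (lam j : ℝ) := by
    rw [Finset.mul_sum]
  have hclear : g * ((-(∑ i ∈ range T, F (N + i)) - 2 * q₀ * ∑ i ∈ range T, (lam (N + i) : ℝ)) / g
        + ∑ k ∈ range M,
            (-(q₀ / g) + ((M : ℝ) + 1 - 2 * ((k : ℕ) + 1)) / (2 * g) + (N : ℝ) / 2) ^ 2)
      = (-(∑ i ∈ range T, F (N + i)) - 2 * q₀ * ∑ i ∈ range T, (lam (N + i) : ℝ))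
        + g * ∑ k ∈ range M,
            (-(q₀ / g) + ((M : ℝ) + 1 - 2 * ((k : ℕ) + 1)) / (2 * g) + (N : ℝ) / 2) ^ 2 := by
    field_simp
  rw [hclear]
  -- the constant identity
  have hCc : (∑ j ∈ range N, (q₀ + g * ((N : ℝ) + 1 - 2 * ((j : ℕ) + 1)) / 2 - (M : ℝ) / 2) ^ 2)
      = N * (q₀ + g * ((N : ℝ) - 1) / 2 - (M : ℝ) / 2) ^ 2
        + (q₀ + g * ((N : ℝ) - 1) / 2 - (M : ℝ) / 2) * (-g) * N * ((N : ℝ) - 1)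
        + (-g) ^ 2 * N * ((N : ℝ) - 1) * (2 * (N : ℝ) - 1) / 6 := by
    have hpt : ∀ j ∈ range N,
        (q₀ + g * ((N : ℝ) + 1 - 2 * ((j : ℕ) + 1)) / 2 - (M : ℝ) / 2) ^ 2
          = ((q₀ + g * ((N : ℝ) - 1) / 2 - (M : ℝ) / 2) + (-g) * (j : ℝ)) ^ 2 :=
      fun j _ => by ring
    rw [Finset.sum_congr rfl hpt, sum_sq_lin]
  have hCd : (∑ k ∈ range M,
        (-(q₀ / g) + ((M : ℝ) + 1 - 2 * ((k : ℕ) + 1)) / (2 * g) + (N : ℝ) / 2) ^ 2)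
      = M * (-(q₀ / g) + ((M : ℝ) - 1) / (2 * g) + (N : ℝ) / 2) ^ 2
        + (-(q₀ / g) + ((M : ℝ) - 1) / (2 * g) + (N : ℝ) / 2) * (-(1 / g)) * M * ((M : ℝ) - 1)
        + (-(1 / g)) ^ 2 * M * ((M : ℝ) - 1) * (2 * (M : ℝ) - 1) / 6 := by
    have hpt : ∀ k ∈ range M,
        (-(q₀ / g) + ((M : ℝ) + 1 - 2 * ((k : ℕ) + 1)) / (2 * g) + (N : ℝ) / 2) ^ 2
          = ((-(q₀ / g) + ((M : ℝ) - 1) / (2 * g) + (N : ℝ) / 2) + (-(1 / g)) * (k : ℝ)) ^ 2 := by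
      intro k _
      field_simp
      ring
    rw [Finset.sum_congr rfl hpt, sum_sq_lin]
  have hC : (∑ j ∈ range N, (q₀ + g * ((N : ℝ) + 1 - 2 * ((j : ℕ) + 1)) / 2 - (M : ℝ) / 2) ^ 2)
      - g * (∑ k ∈ range M,
          (-(q₀ / g) + ((M : ℝ) + 1 - 2 * ((k : ℕ) + 1)) / (2 * g) + (N : ℝ) / 2) ^ 2)
      = q₀ ^ 2 * ((N : ℝ) - (M : ℝ) / g)
        + g ^ 2 / 12 * (((N : ℝ) - M / g) ^ 3 - ((N : ℝ) - M / g ^ 3)) := by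
    rw [hCc, hCd]
    field_simp
    ring
  linear_combination hC + hQ1
end

section
/- Let N, M ≥ 0 be integers. The map λ ↦ n defined by n_j = λ_j for 1 ≤ j ≤ N and n_{N+k} = μ'_k for 1 ≤ k ≤ M (where μ_j = λ_{N+j} and μ' is the conjugate of μ) is a bijection from the set of partitions λ in the fat (N,M)-hook onto the set of vectors n ∈ ℕ₀^{N+M} for which there exists an integer K with 0 ≤ K ≤ M such that n_1 ≥ n_2 ≥ ⋯ ≥ n_N ≥ K, n_{N+1} ≥ n_{N+2} ≥ ⋯ ≥ n_{N+K} ≥ 1, and n_{N+K+1} = ⋯ = n_{N+M} = 0. -/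
open Finset

lemma initial_seg {S : Set ℕ} (hfin : S.Finite)
    (hdc : ∀ a b : ℕ, a ≤ b → b ∈ S → a ∈ S) (i : ℕ) : i ∈ S ↔ i < S.ncard := by
  constructor
  · intro hi
    have hsub : Set.Iic i ⊆ S := fun a ha => hdc a i ha hi
    have h1 : (Set.Iic i).ncard ≤ S.ncard := Set.ncard_le_ncard hsub hfin
    have h2 : (Set.Iic i).ncard = i + 1 := by
      rw [← Finset.coe_Iic, Set.ncard_coe_finset, Nat.card_Iic]
    omega
  · intro hi
    by_contra h
    have hsub : S ⊆ Set.Iio i := by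
      intro t ht
      by_contra ht'
      simp only [Set.mem_Iio, not_lt] at ht'
      exact h (hdc i t ht' ht)
    have h1 := Set.ncard_le_ncard hsub (Set.finite_Iio i)
    have h2 : (Set.Iio i).ncard = i := by
      rw [← Finset.coe_range, Set.ncard_coe_finset, Finset.card_range]
    omega

/-- The map `λ ↦ n` : `n_j = λ_j` for `1 ≤ j ≤ N` and `n_{N+k} = μ'_k` for `1 ≤ k ≤ M`,
where `μ_i = λ_{N+i}` and `μ'` is the conjugate of `μ`. Partitions are encoded
`0`-indexed (`λ_j` of the paper is `lam (j-1)`), and the vector `n` is indexed by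
`Fin (N+M)` (so `n_j` of the paper is `n ⟨j-1⟩`). -/
noncomputable def hookMap (N M : ℕ) (lam : ℕ →₀ ℕ) : Fin (N + M) → ℕ :=
  fun j => if (j : ℕ) < N then lam j
    else Set.ncard {i : ℕ | (j : ℕ) - N + 1 ≤ lam (N + i)}

lemma hookMap_spec {N M : ℕ} {lam : ℕ →₀ ℕ} (hdec : ∀ i j : ℕ, i ≤ j → lam j ≤ lam i)
    {j : Fin (N + M)} (hj : N ≤ (j : ℕ)) (i : ℕ) :
    i < hookMap N M lam j ↔ (j : ℕ) - N + 1 ≤ lam (N + i) := by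
  have hval : hookMap N M lam j = Set.ncard {i : ℕ | (j : ℕ) - N + 1 ≤ lam (N + i)} := by
    simp only [hookMap, if_neg (Nat.not_lt.mpr hj)]
  have hfin : {i : ℕ | (j : ℕ) - N + 1 ≤ lam (N + i)}.Finite := by
    apply Set.Finite.subset (Set.finite_Iio (lam.support.sup id + 1))
    intro i hi
    simp only [Set.mem_setOf_eq] at hi
    have hmem : N + i ∈ lam.support := Finsupp.mem_support_iff.mpr (by omega)
    have := Finset.le_sup (f := id) hmem
    simp only [id_eq] at this
    simp only [Set.mem_Iio]
    omega
  have hdc : ∀ a b : ℕ, a ≤ b → b ∈ {i : ℕ | (j : ℕ) - N + 1 ≤ lam (N + i)} →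
      a ∈ {i : ℕ | (j : ℕ) - N + 1 ≤ lam (N + i)} := by
    intro a b hab hb
    exact le_trans hb (hdec (N + a) (N + b) (by omega))
  rw [hval]
  exact (initial_seg hfin hdc i).symm

noncomputable def nuHook (N K : ℕ) (n' : ℕ → ℕ) (i : ℕ) : ℕ :=
  Set.ncard {k : ℕ | k < K ∧ i + 1 ≤ n' (N + k)}

lemma nuHook_spec {N K : ℕ} {n' : ℕ → ℕ}
    (hn3 : ∀ a b : ℕ, N ≤ a → a ≤ b → b < N + K → n' b ≤ n' a) (i k : ℕ) :
    k < nuHook N K n' i ↔ (k < K ∧ i + 1 ≤ n' (N + k)) := by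
  have hfin : {k : ℕ | k < K ∧ i + 1 ≤ n' (N + k)}.Finite :=
    Set.Finite.subset (Set.finite_Iio K) (fun k hk => hk.1)
  have hdc : ∀ a b : ℕ, a ≤ b → b ∈ {k : ℕ | k < K ∧ i + 1 ≤ n' (N + k)} →
      a ∈ {k : ℕ | k < K ∧ i + 1 ≤ n' (N + k)} := by
    intro a b hab hb
    obtain ⟨hb1, hb2⟩ := hb
    exact ⟨by omega, le_trans hb2 (hn3 (N + a) (N + b) (by omega) (by omega) (by omega))⟩
  exact (initial_seg hfin hdc k).symm

lemma surj_aux (N M K : ℕ) (hK : K ≤ M) (n' : ℕ → ℕ)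
    (hn1 : ∀ a b : ℕ, a ≤ b → b < N → n' b ≤ n' a)
    (hn2 : ∀ a : ℕ, a < N → K ≤ n' a)
    (hn3 : ∀ a b : ℕ, N ≤ a → a ≤ b → b < N + K → n' b ≤ n' a)
    (hn5 : ∀ a : ℕ, N + K ≤ a → n' a = 0) :
    ∃ lam : ℕ →₀ ℕ, (∀ i j : ℕ, i ≤ j → lam j ≤ lam i) ∧ lam N ≤ M ∧
      ∀ j : Fin (N + M), hookMap N M lam j = n' j := by
  set ν := nuHook N K n' with hν
  have νspec : ∀ i k : ℕ, k < ν i ↔ (k < K ∧ i + 1 ≤ n' (N + k)) :=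
    fun i k => nuHook_spec hn3 i k
  have νleK : ∀ i, ν i ≤ K := by
    intro i
    by_contra h
    have := (νspec i K).mp (by omega)
    omega
  set f : ℕ → ℕ := fun j => if j < N then n' j else ν (j - N) with hf
  have hsupp : ∀ j : ℕ, f j ≠ 0 → j ∈ Finset.range (N + n' N + 1) := by
    intro j hj
    simp only [Finset.mem_range]
    by_cases h : j < N
    · omega
    · simp only [hf, if_neg h] at hj
      have h0 : 0 < ν (j - N) := by omega
      have := (νspec (j - N) 0).mp h0
      have hjN : j - N + 1 ≤ n' (N + 0) := this.2
      simp only [Nat.add_zero] at hjN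
      omega
  refine ⟨Finsupp.onFinset (Finset.range (N + n' N + 1)) f hsupp, ?_, ?_, ?_⟩
  · intro i j hij
    simp only [Finsupp.onFinset_apply, hf]
    by_cases hj : j < N
    · rw [if_pos hj, if_pos (show i < N by omega)]
      exact hn1 i j hij hj
    · rw [if_neg hj]
      by_cases hi : i < N
      · rw [if_pos hi]
        exact le_trans (νleK _) (hn2 i hi)
      · rw [if_neg hi]
        by_contra h
        have h' : ν (i - N) < ν (j - N) := by omega
        have h1 := (νspec (j - N) (ν (i - N))).mp h'
        have h2 : ν (i - N) < ν (i - N) := (νspec (i - N) (ν (i - N))).mpr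
          ⟨h1.1, le_trans (by omega) h1.2⟩
        omega
  · simp only [Finsupp.onFinset_apply, hf, if_neg (lt_irrefl N), Nat.sub_self]
    exact le_trans (νleK 0) hK
  · intro j
    by_cases hj : (j : ℕ) < N
    · simp only [hookMap, if_pos hj, Finsupp.onFinset_apply, hf, if_pos hj]
    · have hval : hookMap N M (Finsupp.onFinset (Finset.range (N + n' N + 1)) f hsupp) j =
        Set.ncard {i : ℕ | (j : ℕ) - N + 1 ≤ f (N + i)} := by
        simp only [hookMap, if_neg hj, Finsupp.onFinset_apply]
      rw [hval]
      have hset : {i : ℕ | (j : ℕ) - N + 1 ≤ f (N + i)} = Set.Iio (n' (j : ℕ)) := by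
        ext i
        simp only [Set.mem_setOf_eq, Set.mem_Iio, hf, if_neg (by omega : ¬ N + i < N),
          Nat.add_sub_cancel_left]
        constructor
        · intro h
          have := (νspec i ((j : ℕ) - N)).mp (by omega)
          have hje : N + ((j : ℕ) - N) = (j : ℕ) := by omega
          rw [hje] at this
          omega
        · intro h
          have hjK : (j : ℕ) < N + K := by
            by_contra hc
            have := hn5 (j : ℕ) (by omega)
            omega
          have : (j : ℕ) - N < ν i := (νspec i ((j : ℕ) - N)).mpr
            ⟨by omega, by rw [(by omega : N + ((j : ℕ) - N) = (j : ℕ))]; omega⟩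
          omega
      rw [hset, ← Finset.coe_range, Set.ncard_coe_finset, Finset.card_range]

lemma inj_aux {N M : ℕ} (g g' : ℕ →₀ ℕ)
    (hg : ∀ i j : ℕ, i ≤ j → g j ≤ g i) (hgM : g N ≤ M)
    (hg' : ∀ i j : ℕ, i ≤ j → g' j ≤ g' i)
    (heq : hookMap N M g = hookMap N M g') (i : ℕ) : g (N + i) ≤ g' (N + i) := by
  rcases Nat.eq_zero_or_pos (g (N + i)) with h | h
  · omega
  · set v := g (N + i) with hv
    have hvM : v ≤ M := le_trans (hg N (N + i) (by omega)) hgM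
    have hjlt : N + (v - 1) < N + M := by omega
    set j : Fin (N + M) := ⟨N + (v - 1), hjlt⟩ with hj
    have hcoe : (j : ℕ) = N + (v - 1) := rfl
    have hjN : N ≤ (j : ℕ) := by omega
    have h1 : i < hookMap N M g j := (hookMap_spec hg hjN i).mpr (by omega)
    rw [heq] at h1
    have h2 := (hookMap_spec hg' hjN i).mp h1
    omega

/-- The map `λ ↦ n` is a bijection from the set of partitions in the fat `(N,M)`-hook
onto the set of vectors `n ∈ ℕ₀^{N+M}` with `n_1 ≥ ⋯ ≥ n_N ≥ K`,
`n_{N+1} ≥ ⋯ ≥ n_{N+K} ≥ 1` and `n_{N+K+1} = ⋯ = n_{N+M} = 0` for some `0 ≤ K ≤ M`. -/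
theorem hookMap_bijOn (N M : ℕ) :
    Set.BijOn (hookMap N M)
      {lam : ℕ →₀ ℕ | (∀ i j : ℕ, i ≤ j → lam j ≤ lam i) ∧ lam N ≤ M}
      {n : Fin (N + M) → ℕ | ∃ K : ℕ, K ≤ M
        ∧ (∀ a b : Fin (N + M), a ≤ b → (b : ℕ) < N → n b ≤ n a)
        ∧ (∀ a : Fin (N + M), (a : ℕ) < N → K ≤ n a)
        ∧ (∀ a b : Fin (N + M), N ≤ (a : ℕ) → a ≤ b → (b : ℕ) < N + K → n b ≤ n a)
        ∧ (∀ a : Fin (N + M), N ≤ (a : ℕ) → (a : ℕ) < N + K → 1 ≤ n a)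
        ∧ (∀ a : Fin (N + M), N + K ≤ (a : ℕ) → n a = 0)} := by
  refine ⟨?_, ?_, ?_⟩
  · -- MapsTo
    intro lam hlam
    obtain ⟨hdec, hNM⟩ := hlam
    simp only [Set.mem_setOf_eq]
    refine ⟨lam N, hNM, ?_, ?_, ?_, ?_, ?_⟩
    · intro a b hab hb
      have hab' : (a : ℕ) ≤ (b : ℕ) := hab
      simp only [hookMap, if_pos hb, if_pos (show (a : ℕ) < N by omega)]
      exact hdec a b hab'
    · intro a ha
      simp only [hookMap, if_pos ha]
      exact hdec a N (by omega)
    · intro a b haN hab hbK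
      have hab' : (a : ℕ) ≤ (b : ℕ) := hab
      have hbN : N ≤ (b : ℕ) := by omega
      by_contra h
      push_neg at h
      have h1 := (hookMap_spec hdec hbN (hookMap N M lam a)).mp h
      have h3 : ¬ ((a : ℕ) - N + 1 ≤ lam (N + hookMap N M lam a)) :=
        fun hc => lt_irrefl _ ((hookMap_spec hdec haN (hookMap N M lam a)).mpr hc)
      omega
    · intro a haN haK
      have := (hookMap_spec hdec haN 0).mpr
        (show (a : ℕ) - N + 1 ≤ lam (N + 0) by simp only [Nat.add_zero]; omega)
      omega
    · intro a haK
      by_contra h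
      have h0 : 0 < hookMap N M lam a := by omega
      have := (hookMap_spec hdec (by omega : N ≤ (a : ℕ)) 0).mp h0
      simp only [Nat.add_zero] at this
      omega
  · -- InjOn
    intro lam hlam lam' hlam' heq
    obtain ⟨hdec, hNM⟩ := hlam
    obtain ⟨hdec', hNM'⟩ := hlam'
    apply Finsupp.ext
    intro j
    by_cases hj : j < N
    · have hlt : j < N + M := by omega
      have := congrFun heq ⟨j, hlt⟩
      simpa only [hookMap, if_pos (show ((⟨j, hlt⟩ : Fin (N + M)) : ℕ) < N from hj)] using this
    · have hi := inj_aux lam lam' hdec hNM hdec' heq (j - N)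
      have hi' := inj_aux lam' lam hdec' hNM' hdec heq.symm (j - N)
      rw [(by omega : N + (j - N) = j)] at hi hi'
      omega
  · -- SurjOn
    intro n hn
    obtain ⟨K, hK, h1, h2, h3, h4, h5⟩ := hn
    set n' : ℕ → ℕ := fun t => if h : t < N + M then n ⟨t, h⟩ else 0 with hn'def
    have hn'eq : ∀ j : Fin (N + M), n' (j : ℕ) = n j := by
      intro j
      simp only [hn'def, dif_pos j.isLt, Fin.eta]
    have hn1 : ∀ a b : ℕ, a ≤ b → b < N → n' b ≤ n' a := by
      intro a b hab hb
      have hb' : b < N + M := by omega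
      have ha' : a < N + M := by omega
      simp only [hn'def, dif_pos hb', dif_pos ha']
      exact h1 ⟨a, ha'⟩ ⟨b, hb'⟩ (Fin.mk_le_mk.mpr hab) hb
    have hn2 : ∀ a : ℕ, a < N → K ≤ n' a := by
      intro a ha
      have ha' : a < N + M := by omega
      simp only [hn'def, dif_pos ha']
      exact h2 ⟨a, ha'⟩ ha
    have hn3 : ∀ a b : ℕ, N ≤ a → a ≤ b → b < N + K → n' b ≤ n' a := by
      intro a b ha hab hb
      have hb' : b < N + M := by omega
      have ha' : a < N + M := by omega
      simp only [hn'def, dif_pos hb', dif_pos ha']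
      exact h3 ⟨a, ha'⟩ ⟨b, hb'⟩ ha (Fin.mk_le_mk.mpr hab) hb
    have hn5 : ∀ a : ℕ, N + K ≤ a → n' a = 0 := by
      intro a ha
      by_cases h : a < N + M
      · simp only [hn'def, dif_pos h]
        exact h5 ⟨a, h⟩ ha
      · simp only [hn'def, dif_neg h]
    obtain ⟨lam, hd, hm, hmap⟩ := surj_aux N M K hK n' hn1 hn2 hn3 hn5
    exact ⟨lam, ⟨hd, hm⟩, funext fun j => by rw [hmap j, hn'eq j]⟩
end

section
/- Let x ∈ ℂ with Im x > 0. Then the series ∑_{n=1}^∞ n·e^{inx} converges absolutely and −2·∑_{n=1}^∞ n·e^{inx} = 1/(2·sin²(x/2)), where sin is the complex sine function. -/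
/-! With `q = exp (I * x)` we have `‖q‖ < 1`, the series is `∑ n qⁿ = q / (1 - q)²`, and
`2 sin²(x/2) = -(1 - q)² / (2q)` because `sin (x/2) = (u⁻¹ - u) I / 2` with `u² = q`. -/

open Complex

theorem norm_exp_I_mul_lt_one {x : ℂ} (hx : 0 < x.im) : ‖exp (I * x)‖ < 1 := by
  simpa [norm_exp] using hx

theorem exp_I_mul_nat_mul (n : ℕ) (x : ℂ) : exp (I * n * x) = exp (I * x) ^ n := by
  rw [← exp_nat_mul]
  ring_nf

theorem two_mul_sin_half_sq (x : ℂ) :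
    2 * sin (x / 2) ^ 2 = -(1 - exp (I * x)) ^ 2 / (2 * exp (I * x)) := by
  have hsq : exp (I * x) = exp (x / 2 * I) ^ 2 := by
    rw [← exp_nat_mul]
    ring_nf
  have hne : exp (x / 2 * I) ≠ 0 := exp_ne_zero _
  rw [hsq, sin, neg_mul, exp_neg]
  field_simp
  ring_nf
  rw [I_sq]
  ring

theorem one_div_two_mul_sin_half_sq (x : ℂ) :
    1 / (2 * sin (x / 2) ^ 2) = -2 * (exp (I * x) / (1 - exp (I * x)) ^ 2) := by
  rw [two_mul_sin_half_sq, one_div, inv_div, div_neg, neg_mul, mul_div_assoc]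

/-- For `x` in the upper half plane, `∑_{n≥1} n e^{inx}` converges absolutely and
`−2 ∑_{n≥1} n e^{inx} = 1/(2 sin²(x/2))`. (The term `n = 0` vanishes, so the sum is
taken over all `n : ℕ`.) -/
theorem potential_series (x : ℂ) (hx : 0 < x.im) :
    Summable (fun n : ℕ => ‖(n : ℂ) * Complex.exp (Complex.I * n * x)‖)
    ∧ -2 * ∑' n : ℕ, (n : ℂ) * Complex.exp (Complex.I * n * x)
        = 1 / (2 * Complex.sin (x / 2) ^ 2) := by
  have hq := norm_exp_I_mul_lt_one hx
  simp only [exp_I_mul_nat_mul]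
  refine ⟨?_, ?_⟩
  · simpa using summable_norm_pow_mul_geometric_of_norm_lt_one 1 hq
  · rw [tsum_coe_mul_geometric_of_norm_lt_one hq, one_div_two_mul_sin_half_sq]
end

section
/- Let N, M ≥ 0 be integers, g ∈ ℂ with g ≠ 0, and μ = (μ_1 ≥ … ≥ μ_ℓ > 0) a partition. Then the polynomial P(z,w) = p_μ^{N,M}(z,w;g) in the variables z_1,…,z_N,w_1,…,w_M satisfies the quasi-invariance conditions: for every 1 ≤ j ≤ N and 1 ≤ k ≤ M and every point (z,w) ∈ ℂ^{N+M} with z_j = w_k, one has (∂P/∂z_j + g·∂P/∂w_k)(z,w) = 0. -/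
open Finset

/-- The product of deformed Newton sums
`p_μ^{N,M}(z,w;g) = ∏_i (∑_j z_j^{μ_i} − (1/g) ∑_k w_k^{μ_i})`. -/
noncomputable def pMu (N M ℓ : ℕ) (g : ℂ) (μ : Fin ℓ → ℕ)
    (z : Fin N → ℂ) (w : Fin M → ℂ) : ℂ :=
  ∏ i : Fin ℓ, ((∑ j : Fin N, z j ^ μ i) - (1 / g) * ∑ k : Fin M, w k ^ μ i)

/-!
Each factor of `p_μ` is a deformed Newton sum `p_m = ∑ z^m − (1/g) ∑ w^m`, whose derivatives
`∂p_m/∂z_j = m z_j^{m-1}` and `∂p_m/∂w_k = −(1/g) m w_k^{m-1}` are annihilated by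
`∂/∂z_j + g ∂/∂w_k` on `z_j = w_k`. By the Leibniz rule the operator `∂/∂z_j + g ∂/∂w_k`
acts on a product factor by factor, so it annihilates every product of such sums.
-/

section

variable {𝕜 : Type*} [NontriviallyNormedField 𝕜]

theorem hasDerivAt_sum_update_pow {ι : Type*} [Fintype ι] [DecidableEq ι]
    (v : ι → 𝕜) (j : ι) (m : ℕ) :
    HasDerivAt (fun t => ∑ i, Function.update v j t i ^ m) (m * v j ^ (m - 1)) (v j) := by
  have hsplit : (fun t => ∑ i, Function.update v j t i ^ m)
      = fun t => t ^ m + ∑ i ∈ univ \ {j}, v i ^ m := by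
    funext t
    have hpow : ∀ i, Function.update v j t i ^ m = Function.update (v · ^ m) j (t ^ m) i :=
      fun i => Function.apply_update (fun _ x => x ^ m) v j t i
    simp only [hpow, sum_update_of_mem (mem_univ j)]
  rw [hsplit]
  exact (hasDerivAt_pow m (v j)).add_const _

variable {ι : Type*} [DecidableEq ι] {𝔸 : Type*} [NormedCommRing 𝔸] [NormedAlgebra 𝕜 𝔸]

theorem deriv_prod_add_mul_deriv_prod_eq_zero {s : Finset ι} {f h : ι → 𝕜 → 𝔸}
    {f' h' : ι → 𝔸} {a b : 𝕜} {c : 𝔸}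
    (hf : ∀ i ∈ s, HasDerivAt (f i) (f' i) a) (hh : ∀ i ∈ s, HasDerivAt (h i) (h' i) b)
    (hval : ∀ i ∈ s, f i a = h i b) (hder : ∀ i ∈ s, f' i + c * h' i = 0) :
    deriv (∏ i ∈ s, f i ·) a + c * deriv (∏ i ∈ s, h i ·) b = 0 := by
  rw [(HasDerivAt.fun_finsetProd hf).deriv, (HasDerivAt.fun_finsetProd hh).deriv, mul_sum,
    ← sum_add_distrib]
  refine sum_eq_zero fun i hi => ?_
  have hrest : ∏ j ∈ s.erase i, h j b = ∏ j ∈ s.erase i, f j a :=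
    prod_congr rfl fun j hj => (hval j (mem_of_mem_erase hj)).symm
  rw [hrest, smul_eq_mul, smul_eq_mul, mul_left_comm, ← mul_add, hder i hi, mul_zero]

end

theorem pMu_quasi_invariance_general (N M ℓ : ℕ) (g : ℂ) (hg : g ≠ 0)
    (μ : Fin ℓ → ℕ)
    (j : Fin N) (k : Fin M) (z : Fin N → ℂ) (w : Fin M → ℂ) (h : z j = w k) :
    deriv (fun t : ℂ => pMu N M ℓ g μ (Function.update z j t) w) (z j)
      + g * deriv (fun t : ℂ => pMu N M ℓ g μ z (Function.update w k t)) (w k) = 0 := by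
  refine deriv_prod_add_mul_deriv_prod_eq_zero (s := univ)
    (fun i _ => (hasDerivAt_sum_update_pow z j (μ i)).sub_const _)
    (fun i _ => ((hasDerivAt_sum_update_pow w k (μ i)).const_mul (1 / g)).const_sub _)
    (fun i _ => by simp only [Function.update_eq_self]) (fun i _ => ?_)
  rw [h]
  field_simp
  ring

/-- Quasi-invariance: for a partition `μ` and `g ≠ 0`, the polynomial
`P(z,w) = p_μ^{N,M}(z,w;g)` satisfies `(∂P/∂z_j + g ∂P/∂w_k)(z,w) = 0`
whenever `z_j = w_k`. -/
theorem pMu_quasi_invariance (N M ℓ : ℕ) (g : ℂ) (hg : g ≠ 0)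
    (μ : Fin ℓ → ℕ) (hdec : ∀ i j : Fin ℓ, i ≤ j → μ j ≤ μ i) (hpos : ∀ i, 0 < μ i)
    (j : Fin N) (k : Fin M) (z : Fin N → ℂ) (w : Fin M → ℂ) (h : z j = w k) :
    deriv (fun t : ℂ => pMu N M ℓ g μ (Function.update z j t) w) (z j)
      + g * deriv (fun t : ℂ => pMu N M ℓ g μ z (Function.update w k t)) (w k) = 0 :=
  pMu_quasi_invariance_general N M ℓ g hg μ j k z w h
end

section
/- Let N ≥ 1 be an integer, g > 0 and c real numbers, and n ∈ ℤ^N with n_1 ≥ n_2 ≥ ⋯ ≥ n_N. Let μ_{jk} (1 ≤ j < k ≤ N) be nonnegative integers, not all zero, and set m_j = n_j + ∑_{k>j} μ_{jk} − ∑_{k<j} μ_{kj}. Then ∑_{j=1}^N (m_j + ½g(N+1−2j) + c)² > ∑_{j=1}^N (n_j + ½g(N+1−2j) + c)². -/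
open Finset

/-- Non-degeneracy in the purely bosonic case: squeezing an ordered integer vector `n`
by `m_j = n_j + ∑_{k>j} μ_{jk} − ∑_{k<j} μ_{kj}` with the `μ_{jk}` not all zero strictly
increases the sum of squares of the shifted pseudo-momenta
`n_j⁺ = n_j + ½g(N+1−2j) + c`. -/
theorem sum_sq_strict_increase (N : ℕ) (hN : 1 ≤ N) (g c : ℝ) (hg : 0 < g)
    (n : Fin N → ℤ) (hdec : ∀ j k : Fin N, j ≤ k → n k ≤ n j)
    (μ : Fin N → Fin N → ℕ) (hnz : ∃ j k : Fin N, j < k ∧ μ j k ≠ 0)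
    (m : Fin N → ℤ)
    (hm : m = fun j => n j + (∑ k ∈ Finset.univ.filter (fun k => j < k), (μ j k : ℤ))
        - ∑ k ∈ Finset.univ.filter (fun k => k < j), (μ k j : ℤ)) :
    ∑ j : Fin N, ((n j : ℝ) + g * ((N : ℝ) + 1 - 2 * ((j : ℕ) + 1)) / 2 + c) ^ 2
      < ∑ j : Fin N, ((m j : ℝ) + g * ((N : ℝ) + 1 - 2 * ((j : ℕ) + 1)) / 2 + c) ^ 2 := by
  subst hm
  set a : Fin N → ℝ := fun j => g * ((N : ℝ) + 1 - 2 * ((j : ℕ) + 1)) / 2 + c with ha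
  set p : Fin N → ℝ := fun j => (n j : ℝ) + a j with hp
  set d : Fin N → ℝ := fun j =>
    (∑ k ∈ Finset.univ.filter (fun k => j < k), ((μ j k : ℕ) : ℝ))
      - ∑ k ∈ Finset.univ.filter (fun k => k < j), ((μ k j : ℕ) : ℝ) with hd
  have hpdec : ∀ j k : Fin N, j < k → p k < p j := by
    intro j k hjk
    have h1 : (n k : ℝ) ≤ (n j : ℝ) := by exact_mod_cast hdec j k hjk.le
    have h2 : ((j : ℕ) : ℝ) < ((k : ℕ) : ℝ) := by exact_mod_cast hjk
    simp only [hp, ha]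
    nlinarith
  -- rewrite goal in terms of p and d
  have hgoal : ∑ j : Fin N, (((fun j => n j + (∑ k ∈ Finset.univ.filter (fun k => j < k), (μ j k : ℤ))
        - ∑ k ∈ Finset.univ.filter (fun k => k < j), (μ k j : ℤ)) j : ℝ)
        + g * ((N : ℝ) + 1 - 2 * ((j : ℕ) + 1)) / 2 + c) ^ 2
      = ∑ j : Fin N, (p j + d j) ^ 2 := by
    apply Finset.sum_congr rfl
    intro j _
    simp only [hp, hd, ha]
    push_cast
    ring
  have hlhs : ∑ j : Fin N, ((n j : ℝ) + g * ((N : ℝ) + 1 - 2 * ((j : ℕ) + 1)) / 2 + c) ^ 2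
      = ∑ j : Fin N, (p j) ^ 2 := by
    apply Finset.sum_congr rfl; intro j _; simp only [hp, ha]; ring
  rw [hgoal, hlhs]
  -- expansion
  have hexp : ∑ j : Fin N, (p j + d j) ^ 2
      = ∑ j : Fin N, (p j) ^ 2 + ∑ j : Fin N, (d j) ^ 2 + 2 * ∑ j : Fin N, d j * p j := by
    rw [Finset.mul_sum, ← Finset.sum_add_distrib, ← Finset.sum_add_distrib]
    apply Finset.sum_congr rfl; intro j _; ring
  rw [hexp]
  have hd2 : 0 ≤ ∑ j : Fin N, (d j) ^ 2 := Finset.sum_nonneg fun j _ => sq_nonneg _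
  -- key positivity of T
  have step : ∀ j : Fin N, d j * p j
      = ∑ k : Fin N, (if j < k then (μ j k : ℝ) * p j else 0)
        - ∑ k : Fin N, (if k < j then (μ k j : ℝ) * p j else 0) := by
    intro j
    simp only [hd, Finset.sum_filter, sub_mul, Finset.sum_mul, ite_mul, zero_mul]
  have hT : 0 < ∑ j : Fin N, d j * p j := by
    have e1 : ∑ j : Fin N, d j * p j
        = ∑ j : Fin N, ∑ k : Fin N, (if j < k then (μ j k : ℝ) * (p j - p k) else 0) := by
      rw [Finset.sum_congr rfl (fun j _ => step j), Finset.sum_sub_distrib]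
      rw [Finset.sum_comm (f := fun j k => if k < j then (μ k j : ℝ) * p j else 0)]
      rw [← Finset.sum_sub_distrib]
      apply Finset.sum_congr rfl; intro j _
      rw [← Finset.sum_sub_distrib]
      apply Finset.sum_congr rfl; intro k _
      split_ifs <;> ring
    rw [e1]
    obtain ⟨j0, k0, hjk0, hμ0⟩ := hnz
    apply Finset.sum_pos'
    · intro j _
      apply Finset.sum_nonneg
      intro k _
      split_ifs with h
      · exact mul_nonneg (Nat.cast_nonneg _) (le_of_lt (sub_pos.mpr (hpdec j k h)))
      · exact le_refl 0
    · refine ⟨j0, Finset.mem_univ _, ?_⟩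
      apply Finset.sum_pos'
      · intro k _
        split_ifs with h
        · exact mul_nonneg (Nat.cast_nonneg _) (le_of_lt (sub_pos.mpr (hpdec j0 k h)))
        · exact le_refl 0
      · refine ⟨k0, Finset.mem_univ _, ?_⟩
        rw [if_pos hjk0]
        have : (0 : ℝ) < (μ j0 k0 : ℝ) := by
          exact_mod_cast Nat.pos_of_ne_zero hμ0
        exact mul_pos this (sub_pos.mpr (hpdec j0 k0 hjk0))
  linarith
end
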